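/- Let f₁ = x², f₂ = xy, f₃ = y², so ℓ₁(𝐬) = 2s₁+s₂ and ℓ₂(𝐬) = s₂+2s₃, and let 𝔞 ⊆ ℚ[s₁,s₂,s₃] be the ideal generated by the polynomials g_c = ∏_{j: c_j<0} C(s_j,-c_j) · ∏_{i: ℓ_i(c)>0} C(ℓ_i(𝐬)+ℓ_i(c), ℓ_i(c)) for all c ∈ ℤ³ with c₁+c₂+c₃ = 1, where C(u,m) = u(u-1)⋯(u-m+1)/m!. Then the ideal {b ∈ ℚ[t] : b(s₁+s₂+s₃) ∈ 𝔞} is generated by (t+1)(t+3/2). -/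
import Mathlib


open MvPolynomial

/-- The binomial coefficient polynomial `C(u,m) = u(u-1)⋯(u-m+1)/m!`. -/
noncomputable def binom {σ : Type*} (u : MvPolynomial σ ℚ) (m : ℕ) : MvPolynomial σ ℚ :=
  ((m.factorial : ℚ)⁻¹) • ∏ i ∈ Finset.range m, (u - (i : MvPolynomial σ ℚ))

/-- For `f₁ = x²`, `f₂ = xy`, `f₃ = y²`: `ℓ₁(𝐬) = 2s₁+s₂`, `ℓ₂(𝐬) = s₂+2s₃`. -/
noncomputable def ellS (i : Fin 2) : MvPolynomial (Fin 3) ℚ :=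
  if i = 0 then 2 * X 0 + X 1 else X 1 + 2 * X 2

/-- `ℓ₁(c) = 2c₁+c₂`, `ℓ₂(c) = c₂+2c₃` on `ℤ³`. -/
def ellZ (i : Fin 2) (c : Fin 3 → ℤ) : ℤ :=
  if i = 0 then 2 * c 0 + c 1 else c 1 + 2 * c 2

/-- `g_c = ∏_{j : c_j<0} C(s_j,-c_j) · ∏_{i : ℓ_i(c)>0} C(ℓ_i(𝐬)+ℓ_i(c), ℓ_i(c))`. -/
noncomputable def gc (c : Fin 3 → ℤ) : MvPolynomial (Fin 3) ℚ :=
  (∏ j ∈ Finset.univ.filter (fun j => c j < 0), binom (X j) (-(c j)).toNat) *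
  (∏ i ∈ Finset.univ.filter (fun i => 0 < ellZ i c),
    binom (ellS i + ((ellZ i c).toNat : MvPolynomial (Fin 3) ℚ)) (ellZ i c).toNat)

/-- The Bernstein–Sato ideal `𝔞` generated by the `g_c` with `c₁+c₂+c₃ = 1`. -/
noncomputable def af : Ideal (MvPolynomial (Fin 3) ℚ) :=
  Ideal.span {p | ∃ c : Fin 3 → ℤ, (∑ i, c i) = 1 ∧ p = gc c}

/-! ### Auxiliary lemmas -/

lemma two_C_half : (2 : MvPolynomial (Fin 3) ℚ) * C (1/2 : ℚ) = 1 := by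
  rw [← map_ofNat (C : ℚ →+* MvPolynomial (Fin 3) ℚ) 2, ← C_mul]
  norm_num

lemma two_C_threehalf : (2 : MvPolynomial (Fin 3) ℚ) * C (3/2 : ℚ) = 3 := by
  rw [← map_ofNat (C : ℚ →+* MvPolynomial (Fin 3) ℚ) 2, ← C_mul]
  norm_num
  rw [← map_ofNat (C : ℚ →+* MvPolynomial (Fin 3) ℚ) 3]

lemma binom_one (u : MvPolynomial (Fin 3) ℚ) : binom u 1 = u := by
  simp [binom, Finset.prod_range_one]

lemma binom_two (u : MvPolynomial (Fin 3) ℚ) :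
    (2 : MvPolynomial (Fin 3) ℚ) * binom u 2 = u * (u - 1) := by
  have : binom u 2 = C (1/2 : ℚ) * ((u - 0) * (u - 1)) := by
    simp [binom, Finset.prod_range_succ, Finset.prod_range_one, smul_eq_C_mul]
  rw [this, ← mul_assoc, two_C_half, one_mul, sub_zero]

lemma gc1 : gc ![1,0,0] = binom (ellS 0 + 2) 2 := by
  unfold gc
  have h1 : Finset.univ.filter (fun j => (![1,0,0] : Fin 3 → ℤ) j < 0) = ∅ := by decide
  have h2 : Finset.univ.filter (fun i => 0 < ellZ i ![1,0,0]) = {0} := by decide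
  rw [h1, h2]
  simp [ellZ]

lemma gc2 : gc ![0,1,0] = (ellS 0 + 1) * (ellS 1 + 1) := by
  unfold gc
  have h1 : Finset.univ.filter (fun j => (![0,1,0] : Fin 3 → ℤ) j < 0) = ∅ := by decide
  have h2 : Finset.univ.filter (fun i => 0 < ellZ i ![0,1,0]) = Finset.univ := by decide
  rw [h1, h2, Fin.prod_univ_two]
  simp [ellZ, binom_one]

lemma gc3 : gc ![0,0,1] = binom (ellS 1 + 2) 2 := by
  unfold gc
  have h1 : Finset.univ.filter (fun j => (![0,0,1] : Fin 3 → ℤ) j < 0) = ∅ := by decide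
  have h2 : Finset.univ.filter (fun i => 0 < ellZ i ![0,0,1]) = {1} := by decide
  rw [h1, h2]
  simp [ellZ]

lemma binom_eval_zero (p : Fin 3 → ℚ) (u : MvPolynomial (Fin 3) ℚ) (k m : ℕ)
    (hm : 1 ≤ m) (hmk : m ≤ k) (h : eval p u = (k : ℚ) - m) :
    eval p (binom u k) = 0 := by
  unfold binom
  rw [smul_eq_C_mul, map_mul, map_prod]
  have : ∏ i ∈ Finset.range k, eval p (u - (i : MvPolynomial (Fin 3) ℚ)) = 0 := by
    apply Finset.prod_eq_zero (i := k - m) (Finset.mem_range.mpr (by omega))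
    rw [map_sub, h, map_natCast]
    push_cast [Nat.cast_sub hmk]
    ring
  rw [this, mul_zero]

lemma eval_gc_zero (c : Fin 3 → ℤ) (i : Fin 2) (m : ℕ) (hm : 1 ≤ m)
    (hle : (m : ℤ) ≤ ellZ i c) (p : Fin 3 → ℚ) (hp : eval p (ellS i) = -(m : ℚ)) :
    eval p (gc c) = 0 := by
  unfold gc
  rw [map_mul]
  have hz : eval p (∏ i ∈ Finset.univ.filter (fun i => 0 < ellZ i c),
      binom (ellS i + ((ellZ i c).toNat : MvPolynomial (Fin 3) ℚ)) (ellZ i c).toNat) = 0 := by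
    rw [map_prod]
    apply Finset.prod_eq_zero (i := i)
    · simp only [Finset.mem_filter, Finset.mem_univ, true_and]
      omega
    · apply binom_eval_zero p _ _ m hm (by omega)
      rw [map_add, hp, map_natCast]
      ring
  rw [hz, mul_zero]

lemma af_le_ker (p : Fin 3 → ℚ) (e : ℕ) (he1 : 1 ≤ e) (he2 : (e : ℤ) ≤ 2)
    (h0 : eval p (ellS 0) = -1) (h1 : eval p (ellS 1) = -(e : ℚ)) :
    ∀ q ∈ af, eval p q = 0 := by
  intro q hq
  have hle : af ≤ RingHom.ker (eval p : MvPolynomial (Fin 3) ℚ →+* ℚ) := by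
    apply Ideal.span_le.mpr
    rintro q ⟨c, hc, rfl⟩
    rw [SetLike.mem_coe, RingHom.mem_ker]
    rw [Fin.sum_univ_three] at hc
    by_cases h : 1 ≤ ellZ 0 c
    · exact eval_gc_zero c 0 1 le_rfl (by exact_mod_cast h) p (by simpa using h0)
    · apply eval_gc_zero c 1 e he1 ?_ p h1
      simp only [ellZ] at h ⊢
      norm_num at h ⊢
      omega
  exact hle hq

theorem stmt_6 :
    Ideal.comap (Polynomial.aeval (X 0 + X 1 + X 2 : MvPolynomial (Fin 3) ℚ)).toRingHom af =
      Ideal.span {(Polynomial.X + 1) * (Polynomial.X + Polynomial.C (3/2 : ℚ))} := by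
  set s : MvPolynomial (Fin 3) ℚ := X 0 + X 1 + X 2 with hs
  apply le_antisymm
  · -- hard direction: comap ≤ span
    intro b hb
    rw [Ideal.mem_comap] at hb
    -- evaluation at the two points
    have key : ∀ (p : Fin 3 → ℚ) (e : ℕ), 1 ≤ e → (e : ℤ) ≤ 2 →
        eval p (ellS 0) = -1 → eval p (ellS 1) = -(e : ℚ) →
        Polynomial.eval (eval p s) b = 0 := by
      intro p e he1 he2 h0 h1
      have h := af_le_ker p e he1 he2 h0 h1 _ hb
      have h2 : eval p ((Polynomial.aeval s).toRingHom b) = Polynomial.eval (eval p s) b := by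
        show eval p (Polynomial.aeval s b) = _
        have := (Polynomial.aeval_algHom_apply (MvPolynomial.aeval p) s b).symm
        simpa [Polynomial.coe_aeval_eq_eval] using this
      rw [h2] at h
      exact h
    have hroot1 : Polynomial.eval (-1 : ℚ) b = 0 := by
      have := key ![-1/4, -1/2, -1/4] 1 le_rfl (by norm_num)
        (by simp [ellS]; norm_num) (by simp [ellS]; norm_num)
      simpa [hs] using (by
        have h := this
        rw [show eval (![-1/4, -1/2, -1/4] : Fin 3 → ℚ) s = -1 by
          simp [hs]; norm_num] at h
        exact h)
    have hroot2 : Polynomial.eval (-(3/2) : ℚ) b = 0 := by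
      have := key ![-1/4, -1/2, -3/4] 2 (by norm_num) (by norm_num)
        (by simp [ellS]; norm_num) (by simp [ellS]; norm_num)
      rw [show eval (![-1/4, -1/2, -3/4] : Fin 3 → ℚ) s = -(3/2) by
        simp [hs]; norm_num] at this
      exact this
    have d1 : Polynomial.X + 1 ∣ b := by
      have := Polynomial.dvd_iff_isRoot.mpr hroot1
      simpa [map_neg, sub_neg_eq_add] using this
    have d2 : Polynomial.X + Polynomial.C (3/2 : ℚ) ∣ b := by
      have := Polynomial.dvd_iff_isRoot.mpr hroot2
      simpa [map_neg, sub_neg_eq_add] using this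
    have hcop : IsCoprime (Polynomial.X + 1) (Polynomial.X + Polynomial.C (3/2 : ℚ)) := by
      have := Polynomial.isCoprime_X_sub_C_of_isUnit_sub
        (a := (-1 : ℚ)) (b := -(3/2)) (by norm_num)
      simpa [map_neg, sub_neg_eq_add] using this
    rw [Ideal.mem_span_singleton]
    exact hcop.mul_dvd d1 d2
  · -- easy direction: span ≤ comap
    rw [Ideal.span_le, Set.singleton_subset_iff, SetLike.mem_coe, Ideal.mem_comap]
    have heval : (Polynomial.aeval s).toRingHom ((Polynomial.X + 1) *
        (Polynomial.X + Polynomial.C (3/2 : ℚ))) = (s + 1) * (s + C (3/2 : ℚ)) := by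
      simp [Polynomial.aeval_C, algebraMap_eq]
    rw [heval]
    have m1 : gc ![1,0,0] ∈ af := Ideal.subset_span ⟨![1,0,0], by decide, rfl⟩
    have m2 : gc ![0,1,0] ∈ af := Ideal.subset_span ⟨![0,1,0], by decide, rfl⟩
    have m3 : gc ![0,0,1] ∈ af := Ideal.subset_span ⟨![0,0,1], by decide, rfl⟩
    have key : (4 : MvPolynomial (Fin 3) ℚ) * ((s + 1) * (s + C (3/2 : ℚ))) =
        (2 * X 1 + 4 * X 2 + 3) * (2 * gc ![1,0,0]) +
        (-(4 : MvPolynomial (Fin 3) ℚ) * X 0 - X 1 + 2 * X 2) * gc ![0,1,0] +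
        (-(2 : MvPolynomial (Fin 3) ℚ) * X 0 - X 1) * (2 * gc ![0,0,1]) := by
      rw [gc1, gc2, gc3, binom_two, binom_two]
      simp only [ellS, if_pos, if_neg, hs]
      norm_num
      linear_combination (2 * ((X 0 + X 1 + X 2 : MvPolynomial (Fin 3) ℚ) + 1)) *
        two_C_threehalf
    have h4 : (4 : MvPolynomial (Fin 3) ℚ) * ((s + 1) * (s + C (3/2 : ℚ))) ∈ af := by
      rw [key]
      exact add_mem (add_mem (Ideal.mul_mem_left _ _ (Ideal.mul_mem_left _ _ m1))
        (Ideal.mul_mem_left _ _ m2)) (Ideal.mul_mem_left _ _ (Ideal.mul_mem_left _ _ m3))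
    have : (s + 1) * (s + C (3/2 : ℚ)) =
        C (1/4 : ℚ) * ((4 : MvPolynomial (Fin 3) ℚ) * ((s + 1) * (s + C (3/2 : ℚ)))) := by
      rw [← mul_assoc]
      have : C (1/4 : ℚ) * (4 : MvPolynomial (Fin 3) ℚ) = 1 := by
        rw [← map_ofNat (C : ℚ →+* MvPolynomial (Fin 3) ℚ) 4, ← C_mul]
        norm_num
      rw [this, one_mul]
    rw [this]
    exact Ideal.mul_mem_left _ _ h4
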